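/- Let I be an almost reverse lexicographic ideal in R = k[x_1,...,x_n] with max M_ω(I) = n. Then for every d ≥ 0, H(R/(I + (x_n)), d) = max{0, H(R/I,d) - H(R/I,d-1)}. -/

import Mathlib

open scoped Classical

/-- Degree of an exponent vector (monomial). -/
def mdeg {n : ℕ} (m : Fin n → ℕ) : ℕ := ∑ i, m i

/-- Degree reverse lexicographic order: `M > N`. -/
def RevLexGT {n : ℕ} (M N : Fin n → ℕ) : Prop :=
  mdeg N < mdeg M ∨
    (mdeg M = mdeg N ∧ ∃ s : Fin n, (∀ i : Fin n, s < i → M i = N i) ∧ M s < N s)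

/-- A monomial ideal, identified with its set of monomials (exponent vectors),
is upward closed under divisibility. -/
def MonIdeal {n : ℕ} (I : Set (Fin n → ℕ)) : Prop :=
  ∀ m ∈ I, ∀ m' : Fin n → ℕ, (∀ i, m i ≤ m' i) → m' ∈ I

/-- `m` is a minimal generator of the monomial ideal `I`. -/
def MinGen {n : ℕ} (I : Set (Fin n → ℕ)) (m : Fin n → ℕ) : Prop :=
  m ∈ I ∧ ∀ m' ∈ I, (∀ i, m' i ≤ m i) → m' = m

/-- Almost reverse lexicographic ideal. -/
def ARL {n : ℕ} (I : Set (Fin n → ℕ)) : Prop :=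
  ∀ M N : Fin n → ℕ, MinGen I N → mdeg M = mdeg N → RevLexGT M N → M ∈ I

/-- Strongly stable monomial ideal. -/
def StronglyStable {n : ℕ} (I : Set (Fin n → ℕ)) : Prop :=
  MonIdeal I ∧ ∀ M ∈ I, ∀ i j : Fin n, j < i → 0 < M i →
    (fun k => if k = i then M i - 1 else if k = j then M j + 1 else M k) ∈ I

/-- The last generator `M_ω` of a monomial ideal: a minimal generator of maximal
degree which is smallest in the degree reverse lexicographic order among the
minimal generators of that degree. -/
def IsLastGen {n : ℕ} (I : Set (Fin n → ℕ)) (W : Fin n → ℕ) : Prop :=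
  MinGen I W ∧ (∀ N, MinGen I N → mdeg N ≤ mdeg W) ∧
    (∀ N, MinGen I N → mdeg N = mdeg W → N = W ∨ RevLexGT N W)

/-- `max M`: the largest (1-based) index of a variable dividing `M` (0 for `M = 1`). -/
def maxVar {n : ℕ} (m : Fin n → ℕ) : ℕ :=
  Finset.univ.sup (fun i : Fin n => if 0 < m i then i.1 + 1 else 0)

/-- Hilbert function of `R/I`: the number of monomials of degree `d` not in `I`. -/
noncomputable def hilb {n : ℕ} (I : Set (Fin n → ℕ)) (d : ℕ) : ℕ :=
  Set.ncard {m : Fin n → ℕ | mdeg m = d ∧ m ∉ I}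

/-- Truncation of an exponent vector to its first `i` coordinates. -/
def truncW {n : ℕ} (W : Fin n → ℕ) (i : ℕ) : Fin n → ℕ :=
  fun j => if j.1 < i then W j else 0

/-- The set `𝓘_i` (for `i ≤ μ-2`): exponent vectors supported on the first `i`
coordinates, coordinatewise below the `f_j`'s, i.e. not lying in `I`. -/
def Iset {n : ℕ} (I : Set (Fin n → ℕ)) (i : ℕ) : Set (Fin n → ℕ) :=
  {α | (∀ k : Fin n, i ≤ k.1 → α k = 0) ∧ α ∉ I}

/-- The set `𝓘_{μ-1}`, which additionally requires `α ≥ (ω_1,…,ω_{μ-1})`. -/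
def IsetLast {n : ℕ} (I : Set (Fin n → ℕ)) (W : Fin n → ℕ) (μ : ℕ) :
    Set (Fin n → ℕ) :=
  {α | α ∈ Iset I (μ - 1) ∧ (α = truncW W (μ - 1) ∨ RevLexGT α (truncW W (μ - 1)))}

/-- `f_{i+1}(α) = min {t : x^α x_{i+1}^t ∈ I}` (ℕ-valued, junk `0` if no such `t`). -/
noncomputable def fmin {n : ℕ} (I : Set (Fin n → ℕ)) (α : Fin n → ℕ) (i : Fin n) : ℕ :=
  sInf {t | α + Pi.single i t ∈ I}

/-- `f_{i+1}(α)` valued in `ℕ∞` (equal to `⊤` when no power works). -/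
noncomputable def fminTop {n : ℕ} (I : Set (Fin n → ℕ)) (α : Fin n → ℕ) (i : Fin n) : ℕ∞ :=
  sInf ((fun t : ℕ => (t : ℕ∞)) '' {t | α + Pi.single i t ∈ I})

/-- Iterated truncated difference sequence `h^{(i)}`. -/
def hseq (h : ℕ → ℕ) : ℕ → ℕ → ℕ
  | 0, d => h d
  | _ + 1, 0 => 1
  | i + 1, e + 1 => hseq h i (e + 1) - hseq h i e

/-- The set whose infimum is `r_i(h)`. -/
def rset (h : ℕ → ℕ) (i : ℕ) : Set ℕ :=
  {d | 1 ≤ d ∧ hseq h i d ≤ hseq h i (d - 1)}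

/-- `D(h) = min {i : r_i < ∞}`. -/
noncomputable def Dval (h : ℕ → ℕ) : ℕ := sInf {i | (rset h i).Nonempty}

/-- `h` is unimodal at each tail. -/
def UnimodalAtTails (h : ℕ → ℕ) : Prop :=
  ∀ i, Dval h ≤ i → i < max 1 (h 1) →
    ∀ d, (∃ r ∈ rset h i, r ≤ d) → hseq h i d ≤ hseq h i (d - 1)

/-- The polynomial `Π (1 - z^{d_i})`. -/
noncomputable def froPoly (ds : List ℕ) : Polynomial ℤ :=
  (ds.map (fun d => 1 - Polynomial.X ^ d)).prod

/-- Coefficient of `z^i` in the power series `Π (1 - z^{d_i}) / (1-z)^n`. -/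
noncomputable def froCoeff (n : ℕ) (ds : List ℕ) (i : ℕ) : ℤ :=
  ∑ j ∈ Finset.range (i + 1),
    (froPoly ds).coeff j * (Nat.choose (n - 1 + (i - j)) (i - j) : ℤ)

/-- The Fröberg sequence `|n; d_1,…,d_m|`: the truncation `| · |` of the power
series `Π (1 - z^{d_i}) / (1-z)^n`. -/
noncomputable def fro (n : ℕ) (ds : List ℕ) (i : ℕ) : ℕ :=
  if ∀ j ≤ i, 0 < froCoeff n ds j then (froCoeff n ds i).toNat else 0

/-!
Split the standard monomials of degree `d + 1` according to whether `x_n` divides them; those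
divisible by `x_n` correspond, by division by `x_n`, to the standard monomials `u` of degree `d`
with `u x_n ∉ I`. If `x_n` is a nonzerodivisor on `(R/I)_d` this gives
`H(R/I, d+1) = H(R/(I + (x_n)), d+1) + H(R/I, d)`. Otherwise some minimal generator `g` of degree
at most `d + 1` involves `x_n`. Every monomial of degree `deg g` free of `x_n` is then revlex-greater
than `g`, hence lies in the almost revlex ideal `I`; so `(R/(I + (x_n)))_{d+1} = 0`, while
`H(R/I, d+1) ≤ H(R/I, d)`.
-/

variable {n : ℕ}

lemma apply_le_mdeg (m : Fin n → ℕ) (i : Fin n) : m i ≤ mdeg m :=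
  Finset.single_le_sum (fun j _ => Nat.zero_le (m j)) (Finset.mem_univ i)

lemma mdeg_add_single (m : Fin n → ℕ) (i : Fin n) (t : ℕ) :
    mdeg (m + Pi.single i t) = mdeg m + t := by
  simp [mdeg, Finset.sum_add_distrib, Pi.single_apply]

lemma mdeg_mono {a b : Fin n → ℕ} (h : a ≤ b) : mdeg a ≤ mdeg b :=
  Finset.sum_le_sum fun i _ => h i

lemma finite_setOf_mdeg_eq (d : ℕ) : {m : Fin n → ℕ | mdeg m = d}.Finite :=
  (Set.finite_Iic (fun _ : Fin n => d)).subset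
    fun m hm i => hm ▸ apply_le_mdeg m i

lemma exists_le_mdeg_eq {v : Fin n → ℕ} {e : ℕ} (he : e ≤ mdeg v) :
    ∃ w ≤ v, mdeg w = e := by
  induction e with
  | zero => exact ⟨0, fun i => Nat.zero_le (v i), by simp [mdeg]⟩
  | succ e ih =>
    obtain ⟨w, hwv, hw⟩ := ih (by omega)
    obtain ⟨i, -, hi⟩ := Finset.exists_lt_of_sum_lt (show mdeg w < mdeg v by omega)
    refine ⟨w + Pi.single i 1, fun j => ?_, by rw [mdeg_add_single, hw]⟩
    rcases eq_or_ne j i with rfl | hj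
    · simpa using hi
    · simpa [hj] using hwv j

lemma revLexGT_of_apply_last_lt {M N : Fin (n + 1) → ℕ} (hdeg : mdeg M = mdeg N)
    (h : M (Fin.last n) < N (Fin.last n)) : RevLexGT M N :=
  Or.inr ⟨hdeg, Fin.last n, fun i hi => absurd hi (Fin.le_last i).not_gt, h⟩

lemma ncard_apply_eq_zero_add_ncard_apply_pos (I : Set (Fin n → ℕ)) (i : Fin n) (d : ℕ) :
    {m | mdeg m = d ∧ m ∉ I ∧ m i = 0}.ncard + {m | mdeg m = d ∧ m ∉ I ∧ 0 < m i}.ncard =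
      hilb I d := by
  rw [hilb, ← Set.ncard_inter_add_ncard_sdiff_eq_ncard {m | mdeg m = d ∧ m ∉ I} {m | m i = 0}
    ((finite_setOf_mdeg_eq d).subset fun m hm => hm.1)]
  congr 2 <;> ext m <;> simp [Nat.pos_iff_ne_zero, and_assoc]

section MonomialIdeal

variable {I : Set (Fin n → ℕ)}

lemma ncard_setOf_le_hilb (p : (Fin n → ℕ) → Prop) (d : ℕ) :
    {m | mdeg m = d ∧ m ∉ I ∧ p m}.ncard ≤ hilb I d :=
  Set.ncard_le_ncard (fun _ hm => ⟨hm.1, hm.2.1⟩)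
    ((finite_setOf_mdeg_eq d).subset fun _ hm => hm.1)

lemma exists_minGen_le {c : Fin n → ℕ} (hc : c ∈ I) : ∃ g, MinGen I g ∧ g ≤ c := by
  obtain ⟨g, hgc, hg⟩ := exists_minimal_le_of_wellFoundedLT (· ∈ I) c hc
  exact ⟨g, ⟨hg.prop, fun _ hm hle => hg.eq_of_le hm hle⟩, hgc⟩

lemma MonIdeal.exists_minGen_pos_le_add_single (hI : MonIdeal I) {m : Fin n → ℕ} {i : Fin n}
    (hm : m ∉ I) (hmi : m + Pi.single i 1 ∈ I) :
    ∃ g, MinGen I g ∧ g ≤ m + Pi.single i 1 ∧ 0 < g i := by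
  obtain ⟨g, hg, hgm⟩ := exists_minGen_le hmi
  refine ⟨g, hg, hgm, Nat.pos_of_ne_zero fun hgi => hm (hI g hg.1 m fun j => ?_)⟩
  rcases eq_or_ne j i with rfl | hj
  · omega
  · simpa [hj] using hgm j

lemma MonIdeal.image_add_single (hI : MonIdeal I) (i : Fin n) (e : ℕ) :
    (· + Pi.single i 1) '' {m | mdeg m = e ∧ m ∉ I ∧ m + Pi.single i 1 ∉ I} =
      {m | mdeg m = e + 1 ∧ m ∉ I ∧ 0 < m i} := by
  ext p
  constructor
  · rintro ⟨m, ⟨hm, -, hmi⟩, rfl⟩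
    exact ⟨by rw [mdeg_add_single, hm], hmi, by simp⟩
  · rintro ⟨hp, hpI, hpi⟩
    have hsingle : Pi.single i 1 ≤ p := fun j => by
      rcases eq_or_ne j i with rfl | hj
      · simp only [Pi.single_eq_same]
        exact hpi
      · simp [hj]
    have hcancel : p - Pi.single i 1 + Pi.single i 1 = p := tsub_add_cancel_of_le hsingle
    have hdeg := mdeg_add_single (p - Pi.single i 1) i 1
    rw [hcancel] at hdeg
    exact ⟨p - Pi.single i 1, ⟨by omega, fun h => hpI (hI _ h p fun _ => tsub_le_self),
      by rwa [hcancel]⟩, hcancel⟩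

lemma MonIdeal.ncard_setOf_apply_pos (hI : MonIdeal I) (i : Fin n) (e : ℕ) :
    {m | mdeg m = e + 1 ∧ m ∉ I ∧ 0 < m i}.ncard =
      {m | mdeg m = e ∧ m ∉ I ∧ m + Pi.single i 1 ∉ I}.ncard := by
  rw [← hI.image_add_single i e, Set.ncard_image_of_injective _ (add_left_injective _)]

end MonomialIdeal

lemma ARL.mem_of_apply_last_eq_zero {I : Set (Fin (n + 1) → ℕ)} (hI : MonIdeal I)
    (hARL : ARL I) {g N : Fin (n + 1) → ℕ} (hg : MinGen I g) (hg0 : 0 < g (Fin.last n))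
    (hN : N (Fin.last n) = 0) (hdeg : mdeg g ≤ mdeg N) : N ∈ I := by
  obtain ⟨N', hN'N, hN'⟩ := exists_le_mdeg_eq hdeg
  have hN'0 : N' (Fin.last n) = 0 := Nat.eq_zero_of_le_zero (hN ▸ hN'N (Fin.last n))
  exact hI N' (hARL N' g hg hN' (revLexGT_of_apply_last_lt hN' (by omega))) N hN'N

lemma ARL.setOf_apply_last_eq_zero_eq_empty {I : Set (Fin (n + 1) → ℕ)} (hI : MonIdeal I)
    (hARL : ARL I) {m : Fin (n + 1) → ℕ} (hm : m ∉ I)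
    (hmx : m + Pi.single (Fin.last n) 1 ∈ I) :
    {N | mdeg N = mdeg m + 1 ∧ N ∉ I ∧ N (Fin.last n) = 0} = ∅ := by
  obtain ⟨g, hg, hgm, hg0⟩ := hI.exists_minGen_pos_le_add_single hm hmx
  refine Set.eq_empty_of_forall_notMem fun N ⟨hN, hNI, hN0⟩ => hNI ?_
  refine hARL.mem_of_apply_last_eq_zero hI hg hg0 hN0 ?_
  rw [hN, ← mdeg_add_single]
  exact mdeg_mono hgm

theorem arl_hilbert_quotient_by_last_variable {n : ℕ} (I : Set (Fin (n + 1) → ℕ))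
    (hI : MonIdeal I) (hARL : ARL I)
    (d : ℕ) :
    Set.ncard {m : Fin (n + 1) → ℕ | mdeg m = d ∧ m ∉ I ∧ m (Fin.last n) = 0} =
      hilb I d - (match d with | 0 => 0 | e + 1 => hilb I e) := by
  rw [← ncard_apply_eq_zero_add_ncard_apply_pos I (Fin.last n) d]
  cases d with
  | zero =>
    have hP : {m : Fin (n + 1) → ℕ | mdeg m = 0 ∧ m ∉ I ∧ 0 < m (Fin.last n)} = ∅ :=
      Set.eq_empty_of_forall_notMem fun m ⟨hm, _, hpos⟩ =>
        (apply_le_mdeg m (Fin.last n)).not_gt (hm ▸ hpos)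
    simp [hP]
  | succ e =>
    dsimp only
    rw [hI.ncard_setOf_apply_pos]
    by_cases hreg : ∀ m, mdeg m = e → m ∉ I → m + Pi.single (Fin.last n) 1 ∉ I
    · have hS : {m | mdeg m = e ∧ m ∉ I ∧ m + Pi.single (Fin.last n) 1 ∉ I} =
          {m | mdeg m = e ∧ m ∉ I} :=
        Set.ext fun m => and_congr_right fun hm => and_iff_left_of_imp (hreg m hm)
      rw [hS, ← hilb]
      omega
    · push Not at hreg
      obtain ⟨m, rfl, hm, hmx⟩ := hreg
      have hle := ncard_setOf_le_hilb (I := I) (· + Pi.single (Fin.last n) 1 ∉ I) (mdeg m)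
      rw [hARL.setOf_apply_last_eq_zero_eq_empty hI hm hmx, Set.ncard_empty]
      omega
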